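/- arXiv:1707.05426 — 3 statements merged into one kernel-verified Lean document; each statement's English description precedes it below -/
import Mathlib

section
/- Let f : ℂ → ℂ be continuous with f(z̄) = conj(f(z)) for all z. Then f maps the real axis into the real axis; if moreover f is a homeomorphism of ℂ fixing 0 and 1, then f maps the negative real axis (-∞, 0) bijectively onto itself. -/
/-!
Symmetry forces `conj (f x) = f x` on the real axis, so `f` preserves it. A symmetric
homeomorphism `e` therefore restricts to a continuous injection `g` of `ℝ`; since
`g 0 = 0 < 1 = g 1` it is strictly increasing and sends `(-∞, 0)` into itself. The inverse
`e.symm` is again symmetric and fixes `0` and `1`, so it too maps `(-∞, 0)` into itself.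
-/

open Complex

theorem im_apply_ofReal_eq_zero_of_conj {f : ℂ → ℂ}
    (hsym : ∀ z : ℂ, f ((starRingEnd ℂ) z) = (starRingEnd ℂ) (f z)) (x : ℝ) :
    (f x).im = 0 :=
  conj_eq_iff_im.mp (by rw [← hsym, conj_ofReal])

namespace Homeomorph

variable {e : ℂ ≃ₜ ℂ}

theorem symm_apply_conj (hsym : ∀ z : ℂ, e ((starRingEnd ℂ) z) = (starRingEnd ℂ) (e z))
    (z : ℂ) : e.symm ((starRingEnd ℂ) z) = (starRingEnd ℂ) (e.symm z) :=
  e.injective (by rw [hsym, apply_symm_apply, apply_symm_apply])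

theorem apply_ofReal_eq_ofReal_re
    (hsym : ∀ z : ℂ, e ((starRingEnd ℂ) z) = (starRingEnd ℂ) (e z)) (x : ℝ) :
    e x = ((e x).re : ℂ) :=
  (conj_eq_iff_re.mp (conj_eq_iff_im.mpr (im_apply_ofReal_eq_zero_of_conj hsym x))).symm

theorem strictMono_re_apply_ofReal
    (hsym : ∀ z : ℂ, e ((starRingEnd ℂ) z) = (starRingEnd ℂ) (e z)) (h0 : e 0 = 0)
    (h1 : e 1 = 1) : StrictMono fun x : ℝ => (e x).re := by
  have hcont : Continuous fun x : ℝ => (e x).re := by fun_prop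
  have hinj : Function.Injective fun x : ℝ => (e x).re := fun a b hab => by
    have : e a = e b := by
      rw [apply_ofReal_eq_ofReal_re hsym, apply_ofReal_eq_ofReal_re hsym b]
      exact congrArg _ hab
    exact_mod_cast e.injective this
  refine (hcont.strictMono_of_inj hinj).resolve_right fun hanti => ?_
  have := hanti zero_lt_one
  simp only [ofReal_zero, ofReal_one, h0, h1, zero_re, one_re] at this
  linarith

theorem mapsTo_negative_reals
    (hsym : ∀ z : ℂ, e ((starRingEnd ℂ) z) = (starRingEnd ℂ) (e z)) (h0 : e 0 = 0)
    (h1 : e 1 = 1) :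
    Set.MapsTo e {z : ℂ | z.im = 0 ∧ z.re < 0} {z : ℂ | z.im = 0 ∧ z.re < 0} := by
  rintro z ⟨hzim, hzre⟩
  rw [← conj_eq_iff_re.mp (conj_eq_iff_im.mpr hzim)]
  refine ⟨im_apply_ofReal_eq_zero_of_conj hsym z.re, ?_⟩
  simpa [h0] using strictMono_re_apply_ofReal hsym h0 h1 hzre

end Homeomorph

theorem stmt_1_general (f : ℂ → ℂ)
    (hsym : ∀ z : ℂ, f ((starRingEnd ℂ) z) = (starRingEnd ℂ) (f z)) :
    (∀ x : ℝ, (f (x : ℂ)).im = 0) ∧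
    (∀ e : ℂ ≃ₜ ℂ, (∀ z : ℂ, e ((starRingEnd ℂ) z) = (starRingEnd ℂ) (e z)) →
      e 0 = 0 → e 1 = 1 →
      Set.BijOn e {z : ℂ | z.im = 0 ∧ z.re < 0} {z : ℂ | z.im = 0 ∧ z.re < 0}) := by
  refine ⟨im_apply_ofReal_eq_zero_of_conj hsym, fun e hesym h0 h1 => ?_⟩
  exact e.toEquiv.bijOn' (e.mapsTo_negative_reals hesym h0 h1)
    (e.symm.mapsTo_negative_reals (e.symm_apply_conj hesym) (e.symm_apply_eq.mpr h0.symm)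
      (e.symm_apply_eq.mpr h1.symm))

/-- a continuous map symmetric about the real axis maps reals to reals;
a symmetric homeomorphism of `ℂ` fixing `0` and `1` maps the negative real axis
bijectively onto itself. -/
theorem stmt_1 (f : ℂ → ℂ) (hf : Continuous f)
    (hsym : ∀ z : ℂ, f ((starRingEnd ℂ) z) = (starRingEnd ℂ) (f z)) :
    (∀ x : ℝ, (f (x : ℂ)).im = 0) ∧
    (∀ e : ℂ ≃ₜ ℂ, (∀ z : ℂ, e ((starRingEnd ℂ) z) = (starRingEnd ℂ) (e z)) →
      e 0 = 0 → e 1 = 1 →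
      Set.BijOn e {z : ℂ | z.im = 0 ∧ z.re < 0} {z : ℂ | z.im = 0 ∧ z.re < 0}) :=
  stmt_1_general f hsym
end

section
/- Let d ≥ 2 be an integer and let R : ℝ → (0, ∞) and ξ : ℝ → ℝ be 2π-periodic, piecewise C¹ functions such that |R'(y)| ≤ C₀, c₁ d ≤ R(y) ≤ c₂ d, and c₁ d ≤ ξ'(y) ≤ c₂ d wherever the derivatives exist, for universal constants C₀, c₁, c₂ > 0 independent of d. Define h(x + iy) = (d·x - d·log R(y)) + i·ξ(y). Then the Beltrami coefficient μ = h_{z̄}/h_z satisfies |μ| ≤ k for some constant k < 1 depending only on C₀, c₁, c₂ and not on d. -/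
open Complex

/-! With `a = d`, `s = ξ'` and `t = d R'/R` one has `h_z = ½(a + s + i t)` and
`h_{z̄} = ½(a - s - i t)`, so `|μ|² = N / (N + 4as)` with `N = (a - s)² + t²`.
Since `R ≥ c₁ d`, `|t| ≤ C₀/c₁` is bounded independently of `d`, hence `N ≤ M a²` for
`M = (1 + c₂)² + (C₀/c₁)²`, while `4as ≥ 4c₁a²`; thus `|μ|² ≤ M / (M + 4c₁) < 1`. -/

noncomputable def beltramiCoeff (hx hy : ℂ) : ℂ :=
  (1 / 2 * (hx + I * hy)) / (1 / 2 * (hx - I * hy))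

lemma norm_beltramiCoeff_sq (a p q : ℝ) :
    ‖beltramiCoeff a (p + I * q)‖ ^ 2 = ((a - q) ^ 2 + p ^ 2) / ((a + q) ^ 2 + p ^ 2) := by
  rw [beltramiCoeff, mul_div_mul_left _ _ (by norm_num), norm_div, div_pow,
    ← normSq_eq_norm_sq, ← normSq_eq_norm_sq]
  simp only [normSq_apply, mul_re, mul_im, add_re, add_im, sub_re, sub_im, ofReal_re, ofReal_im,
    I_re, I_im]
  congr 1 <;> ring

lemma div_add_le_div_add {x y X Y : ℝ} (hx : 0 ≤ x) (hy : 0 < y) (hX : 0 ≤ X) (hY : 0 < Y)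
    (h : x * Y ≤ X * y) : x / (x + y) ≤ X / (X + Y) := by
  rw [div_le_div_iff₀ (by positivity) (by positivity)]
  nlinarith

lemma sq_mul_div_le_of_abs_le {a r r' C c : ℝ} (ha : 0 ≤ a) (hc : 0 < c) (hr' : |r'| ≤ C)
    (hr : c * a ≤ r) (hr0 : 0 < r) : (a * (r' / r)) ^ 2 ≤ (C / c) ^ 2 := by
  have hC : 0 ≤ C := (abs_nonneg r').trans hr'
  rw [← sq_abs, abs_mul, abs_div, abs_of_nonneg ha, abs_of_pos hr0]
  refine pow_le_pow_left₀ (by positivity) ?_ 2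
  rw [mul_div_assoc', div_le_div_iff₀ hr0 hc]
  nlinarith [abs_nonneg r']

lemma sq_sub_add_div_le {a s t c₁ c₂ B : ℝ} (ha : 1 ≤ a) (hc₁ : 0 < c₁) (hs : c₁ * a ≤ s)
    (hs' : s ≤ c₂ * a) (ht : t ^ 2 ≤ B ^ 2) :
    ((a - s) ^ 2 + t ^ 2) / ((a + s) ^ 2 + t ^ 2)
      ≤ ((1 + c₂) ^ 2 + B ^ 2) / ((1 + c₂) ^ 2 + B ^ 2 + 4 * c₁) := by
  have hs0 : 0 < s := by nlinarith
  have hN : (a - s) ^ 2 + t ^ 2 ≤ ((1 + c₂) ^ 2 + B ^ 2) * a ^ 2 := by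
    have h1 : (a - s) ^ 2 ≤ ((1 + c₂) * a) ^ 2 := by
      rw [← sq_abs]
      exact pow_le_pow_left₀ (abs_nonneg _) (abs_sub_le_iff.2 ⟨by linarith, by linarith⟩) 2
    have h2 : B ^ 2 ≤ B ^ 2 * a ^ 2 := le_mul_of_one_le_right (sq_nonneg _) (one_le_pow₀ ha)
    linear_combination h1 + ht + h2
  rw [show (a + s) ^ 2 + t ^ 2 = (a - s) ^ 2 + t ^ 2 + 4 * (a * s) by ring]
  refine div_add_le_div_add (by positivity) (by positivity) (by positivity) (by positivity) ?_
  calc ((a - s) ^ 2 + t ^ 2) * (4 * c₁) ≤ ((1 + c₂) ^ 2 + B ^ 2) * a ^ 2 * (4 * c₁) := by gcongr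
    _ = ((1 + c₂) ^ 2 + B ^ 2) * (4 * a * (c₁ * a)) := by ring
    _ ≤ ((1 + c₂) ^ 2 + B ^ 2) * (4 * a * s) := by gcongr
    _ = ((1 + c₂) ^ 2 + B ^ 2) * (4 * (a * s)) := by ring

theorem stmt_9_general (C₀ c₁ c₂ : ℝ) (hc₁ : 0 < c₁) :
    ∃ k : ℝ, 0 ≤ k ∧ k < 1 ∧
      ∀ (d : ℕ), 2 ≤ d → ∀ (R ξ : ℝ → ℝ) (y R' ξ' : ℝ),
        HasDerivAt R R' y → HasDerivAt ξ ξ' y →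
        0 < R y → |R'| ≤ C₀ →
        c₁ * d ≤ R y → R y ≤ c₂ * d →
        c₁ * d ≤ ξ' → ξ' ≤ c₂ * d →
        (let hx : ℂ := (d : ℂ)
         let hy : ℂ := -(d : ℂ) * (R' / R y : ℝ) + Complex.I * (ξ' : ℝ)
         let hz : ℂ := (1 / 2) * (hx - Complex.I * hy)
         let hzbar : ℂ := (1 / 2) * (hx + Complex.I * hy)
         ‖hzbar / hz‖ ≤ k) := by
  set M := (1 + c₂) ^ 2 + (C₀ / c₁) ^ 2
  refine ⟨√(M / (M + 4 * c₁)), Real.sqrt_nonneg _, ?_, ?_⟩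
  · rw [Real.sqrt_lt' one_pos, one_pow, div_lt_one (by positivity)]
    linarith
  intro d hd R ξ y R' ξ' _ _ hRy hR' hR _ hξ hξ'
  have hd1 : (1 : ℝ) ≤ d := by exact_mod_cast (by omega : 1 ≤ d)
  have hhy : -(d : ℂ) * (R' / R y : ℝ) + I * ξ' = ((-(d * (R' / R y)) : ℝ) : ℂ) + I * ξ' := by
    push_cast
    ring
  show ‖beltramiCoeff (d : ℂ) _‖ ≤ _
  rw [Real.le_sqrt (norm_nonneg _) (by positivity), hhy, ← ofReal_natCast, norm_beltramiCoeff_sq]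
  refine sq_sub_add_div_le hd1 hc₁ hξ hξ' ?_
  rw [neg_sq]
  exact sq_mul_div_le_of_abs_le (by positivity) hc₁ hR' hR hRy

/-- for `h(x+iy) = (d·x - d·log R(y)) + i·ξ(y)` with
`|R'| ≤ C₀`, `c₁ d ≤ R ≤ c₂ d` and `c₁ d ≤ ξ' ≤ c₂ d`, the Beltrami coefficient
`μ = h_{z̄}/h_z` (with `h_x = d`, `h_y = -d·R'(y)/R(y) + i·ξ'(y)`,
`h_z = ½(h_x - i h_y)`, `h_{z̄} = ½(h_x + i h_y)`) satisfies `|μ| ≤ k < 1`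
for a constant `k` depending only on `C₀, c₁, c₂`, not on `d`. -/
theorem stmt_9 (C₀ c₁ c₂ : ℝ) (hC₀ : 0 < C₀) (hc₁ : 0 < c₁) (hc₂ : 0 < c₂) :
    ∃ k : ℝ, 0 ≤ k ∧ k < 1 ∧
      ∀ (d : ℕ), 2 ≤ d → ∀ (R ξ : ℝ → ℝ) (y R' ξ' : ℝ),
        HasDerivAt R R' y → HasDerivAt ξ ξ' y →
        0 < R y → |R'| ≤ C₀ →
        c₁ * d ≤ R y → R y ≤ c₂ * d →
        c₁ * d ≤ ξ' → ξ' ≤ c₂ * d →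
        (let hx : ℂ := (d : ℂ)
         let hy : ℂ := -(d : ℂ) * (R' / R y : ℝ) + Complex.I * (ξ' : ℝ)
         let hz : ℂ := (1 / 2) * (hx - Complex.I * hy)
         let hzbar : ℂ := (1 / 2) * (hx + Complex.I * hy)
         ‖hzbar / hz‖ ≤ k) :=
  stmt_9_general C₀ c₁ c₂ hc₁
end

section
/- A continuum (compact connected metric space) cannot fail to be locally connected at exactly one point: if a continuum K in a metric space is locally connected at every point except possibly one point p, then K is locally connected at p as well. -/
/-- `K` is locally connected at `x` if every neighborhood of `x` contains a
connected neighborhood of `x`. -/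
def LocallyConnectedAt {K : Type*} [TopologicalSpace K] (x : K) : Prop :=
  ∀ U ∈ nhds x, ∃ V ∈ nhds x, V ⊆ U ∧ IsPreconnected V

/-!
Let `C` be the component of `p` in a ball `B = ball p ε`. Every other component `D` of `B` is
open, and `p ∉ closure D` (otherwise `D ∪ {p}` would be connected). So the frontier of `D`, which
is nonempty because `K` is connected, lies outside `B`, and `D` reaches every sphere
`sphere p r` with `dist x p < r < ε` for `x ∈ D`. By compactness the sphere of radius `ε / 2` is
covered by finitely many components of `B`; those different from `C` stay a positive distance
away from `p`, and any component meeting `ball p (ε / 2)` meets that sphere. Hence a small ball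
around `p` lies in `C`.
-/
open Set Filter Topology Metric

section Components

variable {X : Type*} [TopologicalSpace X] {F : Set X} {p x z : X}

theorem LocallyConnectedAt.connectedComponentIn_mem_nhds (h : LocallyConnectedAt x)
    (hF : F ∈ 𝓝 x) : connectedComponentIn F x ∈ 𝓝 x := by
  obtain ⟨V, hV, hVF, hVc⟩ := h F hF
  exact mem_of_superset hV (hVc.subset_connectedComponentIn (mem_of_mem_nhds hV) hVF)

theorem connectedComponentIn_eq_of_mem_closure (hp : p ∈ F)
    (h : p ∈ closure (connectedComponentIn F x)) :
    connectedComponentIn F x = connectedComponentIn F p := by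
  have hx : x ∈ F := connectedComponentIn_nonempty_iff.mp (closure_nonempty_iff.mp ⟨p, h⟩)
  have hsub : insert p (connectedComponentIn F x) ⊆ connectedComponentIn F p :=
    (isPreconnected_connectedComponentIn.subset_closure (subset_insert _ _)
      (insert_subset h subset_closure)).subset_connectedComponentIn (mem_insert _ _)
      (insert_subset hp (connectedComponentIn_subset F x))
  exact (connectedComponentIn_eq (hsub (mem_insert_of_mem _ (mem_connectedComponentIn hx)))).symm

theorem notMem_frontier_connectedComponentIn (hz : connectedComponentIn F z ∈ 𝓝 z) :
    z ∉ frontier (connectedComponentIn F x) := by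
  intro hzD
  obtain ⟨w, hwz, hwx⟩ := mem_closure_iff_nhds.mp hzD.1 _ hz
  rw [connectedComponentIn_eq hwx, ← connectedComponentIn_eq hwz] at hzD
  exact hzD.2 (mem_interior_iff_mem_nhds.mpr hz)

theorem frontier_connectedComponentIn_disjoint
    (hlc : ∀ z ∈ F, z ≠ p → connectedComponentIn F z ∈ 𝓝 z) (hp : p ∈ F) (hx : x ∈ F)
    (hxp : x ∉ connectedComponentIn F p) : Disjoint (frontier (connectedComponentIn F x)) F := by
  refine disjoint_left.mpr fun z hzD hzF => ?_
  rcases eq_or_ne z p with rfl | hzp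
  · rw [← connectedComponentIn_eq_of_mem_closure hzF hzD.1] at hxp
    exact hxp (mem_connectedComponentIn hx)
  · exact notMem_frontier_connectedComponentIn (hlc z hzF hzp) hzD

end Components

theorem exists_mem_connectedComponentIn_ball_dist_eq {K : Type*} [PseudoMetricSpace K]
    [PreconnectedSpace K] {p x : K} {ε r : ℝ}
    (hlc : ∀ z ∈ ball p ε, z ≠ p → connectedComponentIn (ball p ε) z ∈ 𝓝 z)
    (hxr : dist x p < r) (hrε : r < ε) (hxp : x ∉ connectedComponentIn (ball p ε) p) :
    ∃ y ∈ connectedComponentIn (ball p ε) x, dist y p = r := by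
  set D := connectedComponentIn (ball p ε) x
  have hp : p ∈ ball p ε := mem_ball_self ((dist_nonneg.trans_lt hxr).trans hrε)
  have hx : x ∈ ball p ε := mem_ball.mpr (hxr.trans hrε)
  have hdisj := frontier_connectedComponentIn_disjoint hlc hp hx hxp
  have hpD : p ∉ D := fun hpD => hxp (connectedComponentIn_eq hpD ▸ mem_connectedComponentIn hx)
  obtain ⟨z, hz⟩ := nonempty_frontier_iff.mpr
    ⟨⟨x, mem_connectedComponentIn hx⟩, fun hD => hpD (eq_univ_iff_forall.mp hD p)⟩
  have hzε : ε ≤ dist z p := not_lt.mp fun h => disjoint_left.mp hdisj hz (mem_ball.mpr h)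
  obtain ⟨y, hyD, hyr⟩ := isPreconnected_connectedComponentIn.closure.intermediate_value
    (subset_closure (mem_connectedComponentIn hx)) hz.1
    (continuous_id.dist continuous_const).continuousOn
    ⟨hxr.le, hrε.le.trans hzε⟩
  refine ⟨y, ?_, hyr⟩
  have hyB : y ∈ ball p ε := mem_ball.mpr (hyr.trans_lt hrε)
  have hyF : y ∉ frontier D := fun hyF => disjoint_left.mp hdisj hyF hyB
  exact interior_subset (closure_sdiff_frontier D ▸ ⟨hyD, hyF⟩)

/-- a continuum (compact connected metric space) cannot fail to be
locally connected at exactly one point. -/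
theorem stmt_14 (K : Type*) [MetricSpace K] [CompactSpace K] [ConnectedSpace K]
    (p : K) (h : ∀ x : K, x ≠ p → LocallyConnectedAt x) :
    LocallyConnectedAt p := by
  intro U hU
  obtain ⟨ε, hε, hεU⟩ := Metric.mem_nhds_iff.mp hU
  set C := connectedComponentIn (ball p ε) p
  have hlc : ∀ z ∈ ball p ε, z ≠ p → connectedComponentIn (ball p ε) z ∈ 𝓝 z :=
    fun z hz hzp => (h z hzp).connectedComponentIn_mem_nhds (isOpen_ball.mem_nhds hz)
  refine ⟨C, ?_, (connectedComponentIn_subset _ _).trans hεU, isPreconnected_connectedComponentIn⟩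
  have hS : sphere p (ε / 2) ⊆ ball p ε := sphere_subset_ball (half_lt_self hε)
  obtain ⟨t, -, hcover⟩ := (isCompact_sphere p (ε / 2)).elim_nhds_subcover
    (connectedComponentIn (ball p ε))
    fun q hq => hlc q (hS hq) (ne_of_mem_sphere hq (half_pos hε).ne')
  have hfar : ∀ q ∈ t, ∀ᶠ x in 𝓝 p, x ∈ connectedComponentIn (ball p ε) q → x ∈ C := by
    intro q _
    by_cases hpq : p ∈ closure (connectedComponentIn (ball p ε) q)
    · rw [connectedComponentIn_eq_of_mem_closure (mem_ball_self hε) hpq]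
      exact Eventually.of_forall fun _ => id
    · filter_upwards [isClosed_closure.isOpen_compl.mem_nhds hpq] with x hx hxq
      exact absurd (subset_closure hxq) hx
  filter_upwards [ball_mem_nhds p (half_pos hε), (eventually_all_finset t).2 hfar] with x hx hxt
  by_contra hxC
  obtain ⟨y, hyx, hyr⟩ :=
    exists_mem_connectedComponentIn_ball_dist_eq hlc hx (half_lt_self hε) hxC
  obtain ⟨q, hqt, hyq⟩ := mem_iUnion₂.mp (hcover (mem_sphere.mpr hyr))
  refine hxC (hxt q hqt ?_)
  rw [connectedComponentIn_eq hyq, ← connectedComponentIn_eq hyx]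
  exact mem_connectedComponentIn (mem_ball.mpr (hx.trans (half_lt_self hε)))
end
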